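/- arXiv:1503.06379 — 2 statements merged into one kernel-verified Lean document; each statement's English description precedes it below -/
import Mathlib

section
/- (Lemma 4.) Let M ∈ ℝ^{m×n} have rank ρ with SVD M = UΣVᵀ and strictly positive leverage scores μ_i, ν_j. Let Z ∈ ℝ^{m×n} be a fixed matrix. Let (δ_ij) be independent {0,1}-valued random variables with P(δ_ij = 1) = q_ij, where q_ij ≥ min{ c₀ log(m+n) · L_ij , 1 } and L_ij = (μ_iρ/m) + (ν_jρ/n) − (μ_iρ/m)(ν_jρ/n), and let Ω = {(i,j) : δ_ij = 1} with sampling operator R_Ω built from the weights q_ij. Then for any c > 3 and c₀ ≥ 68c, with probability at least 1 − (m+n)^{3−c}, ‖(P_T R_Ω − P_T)(Z)‖_{μ(∞)} ≤ (1/2) ‖Z‖_{μ(∞)}. -/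
open Matrix MeasureTheory ProbabilityTheory

noncomputable def frobNorm {m n : ℕ} (X : Matrix (Fin m) (Fin n) ℝ) : ℝ :=
  Real.sqrt (∑ i, ∑ j, X i j ^ 2)

noncomputable def eNorm {k : ℕ} (v : Fin k → ℝ) : ℝ := Real.sqrt (∑ i, v i ^ 2)

/-- The spectral norm (largest singular value) of a matrix. -/
noncomputable def specNorm {a b : ℕ} (X : Matrix (Fin a) (Fin b) ℝ) : ℝ :=
  ⨆ v : Fin b → ℝ, eNorm (X.mulVec v) / eNorm v

/-- Operator norm of a map on matrices, with respect to the Frobenius norm. -/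
noncomputable def opNorm {m n : ℕ}
    (A : Matrix (Fin m) (Fin n) ℝ → Matrix (Fin m) (Fin n) ℝ) : ℝ :=
  ⨆ X, frobNorm (A X) / frobNorm X

/-- The orthogonal projection `P_T(X) = UUᵀX + XVVᵀ − UUᵀXVVᵀ`. -/
noncomputable def PT {m n ρ : ℕ} (U : Matrix (Fin m) (Fin ρ) ℝ) (V : Matrix (Fin n) (Fin ρ) ℝ)
    (X : Matrix (Fin m) (Fin n) ℝ) : Matrix (Fin m) (Fin n) ℝ :=
  U * Uᵀ * X + X * (V * Vᵀ) - U * Uᵀ * X * (V * Vᵀ)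

open Classical in
/-- The sampling operator `R_Ω(X) = ∑_{(i,j)∈Ω} (1/q_ij) X_ij e_i e_jᵀ`. -/
noncomputable def RΩ {m n : ℕ} (Ω : Set (Fin m × Fin n)) (q : Fin m → Fin n → ℝ)
    (X : Matrix (Fin m) (Fin n) ℝ) : Matrix (Fin m) (Fin n) ℝ :=
  fun i j => if (i, j) ∈ Ω then (q i j)⁻¹ * X i j else 0

/-- The weighted norm `‖Z‖_{μ(∞,2)}`. -/
noncomputable def muNormInf2 {m n : ℕ} (ρ : ℕ) (μ : Fin m → ℝ) (ν : Fin n → ℝ)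
    (Z : Matrix (Fin m) (Fin n) ℝ) : ℝ :=
  max (⨆ i : Fin m, Real.sqrt ((m : ℝ) / (μ i * ρ)) * eNorm (fun j => Z i j))
      (⨆ j : Fin n, Real.sqrt ((n : ℝ) / (ν j * ρ)) * eNorm (fun i => Z i j))

/-- The weighted norm `‖Z‖_{μ(∞)}`. -/
noncomputable def muNormInf {m n : ℕ} (ρ : ℕ) (μ : Fin m → ℝ) (ν : Fin n → ℝ)
    (Z : Matrix (Fin m) (Fin n) ℝ) : ℝ :=
  ⨆ i : Fin m, ⨆ j : Fin n,
    |Z i j| * Real.sqrt ((m : ℝ) / (μ i * ρ)) * Real.sqrt ((n : ℝ) / (ν j * ρ))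

/-!
Entrywise, `(P_T R_Ω − P_T)(Z)_{ab} = ∑_{ij} Z_ij ⟨P_T(e_i e_jᵀ), e_a e_bᵀ⟩ (δ_ij / q_ij − 1)` is a
sum of independent centred variables. Write `α_i = μ_i ρ / m`, `β_j = ν_j ρ / n` and
`K = ‖Z‖_{μ(∞)}`, so that `|Z_ij| ≤ K √(α_i β_j)`. Since `P_T` is built from the projections `UUᵀ`
and `VVᵀ`, whose entries satisfy `(UUᵀ)_{ai}² ≤ α_a α_i` and `∑_i (UUᵀ)_{ai}² = α_a`, each
summand is at most `K √(α_a β_b) L_ij / q_ij` and the variance is at most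
`4 K² α_a β_b / (c₀ log(m+n))`, the `L_ij` cancelling against `q_ij ≥ min(c₀ log(m+n) L_ij, 1)`.
A Chernoff bound based on `exp u ≤ 1 + u + u²` for `|u| ≤ 1` then gives
`P(|…_{ab}| > K √(α_a β_b) / 2) ≤ 2 (m+n)^{-c₀/64}`, and a union bound over the
`mn ≤ (m+n)² / 2` entries leaves the failure probability `(m+n)^{2 - c₀/64} ≤ (m+n)^{3-c}`.
-/

open Real

/-- `δ / q - 1`, for the Bernoulli indicator `δ` encoded by `b`. -/
noncomputable def bernoulliDeviation (q : ℝ) (b : Bool) : ℝ := if b then q⁻¹ - 1 else -1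

lemma one_sub_div_le_inv_of_min_le {x q : ℝ} (hx : 0 < x) (hq : 0 < q) (h : min x 1 ≤ q) :
    (1 - q) / q ≤ x⁻¹ := by
  rcases min_le_iff.1 h with h | h
  · rw [div_le_iff₀ hq]
    have : 1 ≤ x⁻¹ * q := by rw [inv_mul_eq_div, one_le_div hx]; exact h
    linarith
  · exact (div_nonpos_of_nonpos_of_nonneg (by linarith) hq.le).trans (inv_nonneg.2 hx.le)

lemma mul_mul_two_exp_le_rpow {x y c c₀ : ℝ} (hxy : 1 ≤ x + y) (hc : 64 * (c - 1) ≤ c₀) :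
    x * y * (2 * exp (-(c₀ * log (x + y) / 64))) ≤ (x + y) ^ (3 - c) := by
  have hpos : 0 < x + y := by linarith
  have hlog : 0 ≤ log (x + y) := log_nonneg hxy
  rw [rpow_def_of_pos hpos]
  calc x * y * (2 * exp (-(c₀ * log (x + y) / 64)))
      ≤ (x + y) ^ 2 * exp (-(c₀ * log (x + y) / 64)) := by
        rw [← mul_assoc, mul_comm _ 2, ← mul_assoc]
        gcongr
        nlinarith [sq_nonneg (x - y)]
    _ = exp (log (x + y) * 2 + -(c₀ * log (x + y) / 64)) := by
        rw [exp_add, ← rpow_def_of_pos hpos, rpow_two]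
    _ ≤ exp (log (x + y) * (3 - c)) :=
        exp_le_exp.2 (by nlinarith [mul_le_mul_of_nonneg_left hc hlog])

section Chernoff

variable {Ω : Type*} [MeasurableSpace Ω] {P : Measure Ω} [IsProbabilityMeasure P]

lemma ofReal_one_sub_card_mul_le_measure_compl_iUnion {ι : Type*} [Fintype ι] {E : ι → Set Ω}
    {r : ℝ} (hr : 0 ≤ r) (hE : ∀ i, P (E i) ≤ ENNReal.ofReal r) :
    ENNReal.ofReal (1 - Fintype.card ι * r) ≤ P (⋃ i, E i)ᶜ := by
  have hunion : P (⋃ i, E i) ≤ ENNReal.ofReal (Fintype.card ι * r) :=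
    calc P (⋃ i, E i) ≤ ∑ i, P (E i) := measure_iUnion_fintype_le P E
      _ ≤ ∑ _i : ι, ENNReal.ofReal r := Finset.sum_le_sum fun i _ => hE i
      _ = _ := by
          rw [Finset.sum_const, Finset.card_univ, nsmul_eq_mul,
            ENNReal.ofReal_mul (Nat.cast_nonneg _), ENNReal.ofReal_natCast]
  have hone : 1 ≤ P (⋃ i, E i) + P (⋃ i, E i)ᶜ := by
    rw [← measure_univ (μ := P), ← Set.union_compl_self (⋃ i, E i)]
    exact measure_union_le _ _
  rw [ENNReal.ofReal_sub _ (by positivity), ENNReal.ofReal_one]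
  exact (tsub_le_tsub_left hunion 1).trans (tsub_le_iff_left.2 hone)

lemma integral_comp_bool {d : Ω → Bool} (hd : Measurable d) {q : ℝ} (hq0 : 0 ≤ q) (hq1 : q ≤ 1)
    (hb : P {ω | d ω = true} = ENNReal.ofReal q) (f : Bool → ℝ) :
    ∫ ω, f (d ω) ∂P = q * f true + (1 - q) * f false := by
  have hfalse : P {ω | d ω = false} = ENNReal.ofReal (1 - q) := by
    have hset : {ω | d ω = false} = {ω | d ω = true}ᶜ := by ext; simp
    have hS : MeasurableSet {ω | d ω = true} := hd (measurableSet_singleton true)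
    rw [hset, prob_compl_eq_one_sub hS, hb, ENNReal.ofReal_sub _ hq0, ENNReal.ofReal_one]
  rw [← integral_map hd.aemeasurable (by fun_prop), integral_fintype Integrable.of_finite]
  simp [Measure.real, Measure.map_apply hd (measurableSet_singleton _), Set.preimage, hb, hfalse,
    hq0, hq1]

lemma mgf_bernoulliDeviation_le {d : Ω → Bool} (hd : Measurable d) {q : ℝ} (hq0 : 0 < q)
    (hq1 : q ≤ 1) (hb : P {ω | d ω = true} = ENNReal.ofReal q) {w t : ℝ}
    (hx : |t * w| * ((1 - q) / q) ≤ 1) (hy : q < 1 → |t * w| ≤ 1) :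
    mgf (fun ω => w * bernoulliDeviation q (d ω)) P t ≤ exp (t ^ 2 * (w ^ 2 * (1 - q) / q)) := by
  rw [mgf, integral_comp_bool hd hq0.le hq1 hb (fun b => exp (t * (w * bernoulliDeviation q b)))]
  simp only [bernoulliDeviation, if_true, Bool.false_eq_true, if_false]
  rcases hq1.lt_or_eq with hlt | rfl
  · set x := t * (w * (q⁻¹ - 1))
    set y := t * (w * -1)
    have hx' : |x| ≤ 1 := by
      rwa [show x = t * w * ((1 - q) / q) by simp only [x]; field_simp, abs_mul,
        abs_of_nonneg (div_nonneg (by linarith) hq0.le)]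
    have hy' : |y| ≤ 1 := by simpa [y, abs_mul] using hy hlt
    have ex := (abs_le.1 (abs_exp_sub_one_sub_id_le hx')).2
    have ey := (abs_le.1 (abs_exp_sub_one_sub_id_le hy')).2
    -- the linear terms cancel: `q x + (1 - q) y = 0`
    calc q * exp x + (1 - q) * exp y
        ≤ q * (1 + x + x ^ 2) + (1 - q) * (1 + y + y ^ 2) := by gcongr <;> linarith
      _ = t ^ 2 * (w ^ 2 * (1 - q) / q) + 1 := by simp only [x, y]; field_simp; ring
      _ ≤ _ := add_one_le_exp _
  · simp

variable {ι : Type*} [Fintype ι] {δ : ι → Ω → Bool} {q : ι → ℝ}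

lemma measure_ge_sum_bernoulliDeviation_le (hδ : ∀ i, Measurable (δ i)) (hindep : iIndepFun δ P)
    (hq0 : ∀ i, 0 < q i) (hq1 : ∀ i, q i ≤ 1)
    (hb : ∀ i, P {ω | δ i ω = true} = ENNReal.ofReal (q i)) (w : ι → ℝ) {t : ℝ} (ht : 0 ≤ t)
    (ε : ℝ) (hx : ∀ i, |t * w i| * ((1 - q i) / q i) ≤ 1) (hy : ∀ i, q i < 1 → |t * w i| ≤ 1) :
    P {ω | ε ≤ ∑ i, w i * bernoulliDeviation (q i) (δ i ω)}
      ≤ ENNReal.ofReal (exp (-t * ε + t ^ 2 * ∑ i, w i ^ 2 * (1 - q i) / q i)) := by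
  set g : ι → Bool → ℝ := fun i b => w i * bernoulliDeviation (q i) b
  set Y : ι → Ω → ℝ := fun i ω => g i (δ i ω)
  have hY : ∀ i, Measurable (Y i) := fun i => (measurable_of_countable (g i)).comp (hδ i)
  have hint : Integrable (fun ω => exp (t * ∑ i, Y i ω)) P :=
    (Integrable.of_finite (f := fun b : ι → Bool => exp (t * ∑ i, g i (b i)))).comp_measurable
      (measurable_pi_lambda _ hδ)
  have hmgf : mgf (fun ω => ∑ i, Y i ω) P t = ∏ i, mgf (Y i) P t := by
    convert (hindep.comp g fun i => measurable_of_countable (g i)).mgf_sum (t := t) hY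
      Finset.univ using 2
    · ext ω
      simp [Y]
    · rfl
  rw [← ENNReal.ofReal_toReal (measure_ne_top P _)]
  refine ENNReal.ofReal_le_ofReal ((measure_ge_le_exp_mul_mgf ε ht hint).trans ?_)
  rw [hmgf, exp_add, Finset.mul_sum, exp_sum]
  gcongr with i
  · exact fun i _ => mgf_nonneg
  · exact mgf_bernoulliDeviation_le (hδ i) (hq0 i) (hq1 i) (hb i) (hx i) (hy i)

lemma measure_ge_abs_sum_bernoulliDeviation_le (hδ : ∀ i, Measurable (δ i))
    (hindep : iIndepFun δ P) (hq0 : ∀ i, 0 < q i) (hq1 : ∀ i, q i ≤ 1)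
    (hb : ∀ i, P {ω | δ i ω = true} = ENNReal.ofReal (q i)) (w : ι → ℝ) {t : ℝ} (ht : 0 ≤ t)
    (ε : ℝ) (hx : ∀ i, |t * w i| * ((1 - q i) / q i) ≤ 1) (hy : ∀ i, q i < 1 → |t * w i| ≤ 1) :
    P {ω | ε ≤ |∑ i, w i * bernoulliDeviation (q i) (δ i ω)|}
      ≤ ENNReal.ofReal (2 * exp (-t * ε + t ^ 2 * ∑ i, w i ^ 2 * (1 - q i) / q i)) := by
  have hupper := measure_ge_sum_bernoulliDeviation_le hδ hindep hq0 hq1 hb w ht ε hx hy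
  have hlower := measure_ge_sum_bernoulliDeviation_le hδ hindep hq0 hq1 hb (fun i => -w i) ht ε
    (by simpa only [mul_neg, abs_neg] using hx) (by simpa only [mul_neg, abs_neg] using hy)
  simp only [neg_sq, neg_mul, Finset.sum_neg_distrib] at hlower hupper ⊢
  calc _ ≤ P ({ω | ε ≤ ∑ i, w i * bernoulliDeviation (q i) (δ i ω)}
          ∪ {ω | ε ≤ -∑ i, w i * bernoulliDeviation (q i) (δ i ω)}) :=
        measure_mono fun ω (hω : ε ≤ |_|) => le_abs.1 hω
    _ ≤ _ := (measure_union_le _ _).trans (add_le_add hupper hlower)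
    _ = _ := by rw [← ENNReal.ofReal_add (by positivity) (by positivity), two_mul]

lemma measure_half_le_abs_sum_bernoulliDeviation_le (hδ : ∀ i, Measurable (δ i))
    (hindep : iIndepFun δ P) (hq0 : ∀ i, 0 < q i) (hq1 : ∀ i, q i ≤ 1)
    (hb : ∀ i, P {ω | δ i ω = true} = ENNReal.ofReal (q i)) {w ℓ : ι → ℝ} {A lam : ℝ}
    (hA : 0 < A) (hlam : 0 < lam) (hℓ : ∀ i, 0 < ℓ i) (hq : ∀ i, min (lam * ℓ i) 1 ≤ q i)
    (hw : ∀ i, |w i| ≤ A * ℓ i) (hvar : ∑ i, w i ^ 2 / ℓ i ≤ 4 * A ^ 2) :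
    P {ω | A / 2 ≤ |∑ i, w i * bernoulliDeviation (q i) (δ i ω)|}
      ≤ ENNReal.ofReal (2 * exp (-(lam / 64))) := by
  have hfrac : ∀ i, (1 - q i) / q i ≤ (lam * ℓ i)⁻¹ := fun i =>
    one_sub_div_le_inv_of_min_le (mul_pos hlam (hℓ i)) (hq0 i) (hq i)
  -- with this `t` the exponent is `-λ/32 + λ/64`
  set t := lam / (16 * A)
  have ht : 0 ≤ t := by positivity
  have htw : ∀ i, |t * w i| ≤ t * A * ℓ i := fun i => by
    rw [abs_mul, abs_of_nonneg ht, mul_assoc]; gcongr; exact hw i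
  have htAℓ0 : ∀ i, 0 ≤ t * A * ℓ i := fun i => by have := hℓ i; positivity
  have htAℓ : ∀ i, t * A * ℓ i * (lam * ℓ i)⁻¹ ≤ 1 := fun i => by
    have := (hℓ i).ne'; simp only [t]; field_simp; norm_num
  have hx : ∀ i, |t * w i| * ((1 - q i) / q i) ≤ 1 := fun i =>
    (mul_le_mul (htw i) (hfrac i) (div_nonneg (sub_nonneg.2 (hq1 i)) (hq0 i).le)
      (htAℓ0 i)).trans (htAℓ i)
  have hy : ∀ i, q i < 1 → |t * w i| ≤ 1 := fun i hlt => by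
    have hℓlam : lam * ℓ i ≤ 1 := (min_le_iff.1 (hq i)).resolve_right (by linarith) |>.trans hlt.le
    refine ((htw i).trans (le_mul_of_one_le_right (htAℓ0 i) ?_)).trans (htAℓ i)
    exact one_le_inv₀ (mul_pos hlam (hℓ i)) |>.2 hℓlam
  have hvar' : ∑ i, w i ^ 2 * (1 - q i) / q i ≤ 4 * A ^ 2 / lam :=
    calc ∑ i, w i ^ 2 * (1 - q i) / q i ≤ ∑ i, w i ^ 2 / ℓ i / lam := by
          refine Finset.sum_le_sum fun i _ => ?_
          rw [mul_div_assoc, div_div, div_eq_mul_inv _ (ℓ i * lam), mul_comm (ℓ i)]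
          exact mul_le_mul_of_nonneg_left (hfrac i) (sq_nonneg _)
      _ ≤ _ := by rw [← Finset.sum_div]; gcongr
  refine (measure_ge_abs_sum_bernoulliDeviation_le hδ hindep hq0 hq1 hb w ht (A / 2) hx hy).trans ?_
  gcongr
  calc -t * (A / 2) + t ^ 2 * ∑ i, w i ^ 2 * (1 - q i) / q i
      ≤ -t * (A / 2) + t ^ 2 * (4 * A ^ 2 / lam) := by gcongr
    _ = -(lam / 64) := by simp only [t]; field_simp; ring

lemma measure_half_lt_abs_sum_bernoulliDeviation_le (hδ : ∀ i, Measurable (δ i))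
    (hindep : iIndepFun δ P) (hq0 : ∀ i, 0 < q i) (hq1 : ∀ i, q i ≤ 1)
    (hb : ∀ i, P {ω | δ i ω = true} = ENNReal.ofReal (q i)) {w ℓ : ι → ℝ} {A lam : ℝ}
    (hA : 0 ≤ A) (hlam : 0 < lam) (hℓ : ∀ i, 0 < ℓ i) (hq : ∀ i, min (lam * ℓ i) 1 ≤ q i)
    (hw : ∀ i, |w i| ≤ A * ℓ i) (hvar : ∑ i, w i ^ 2 / ℓ i ≤ 4 * A ^ 2) :
    P {ω | A / 2 < |∑ i, w i * bernoulliDeviation (q i) (δ i ω)|}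
      ≤ ENNReal.ofReal (2 * exp (-(lam / 64))) := by
  rcases hA.eq_or_lt with rfl | hA
  · have hw0 : ∀ i, w i = 0 := fun i => abs_nonpos_iff.1 (by simpa using hw i)
    simp [hw0]
  · exact (measure_mono fun ω (hω : A / 2 < |_|) => hω.le).trans
      (measure_half_le_abs_sum_bernoulliDeviation_le hδ hindep hq0 hq1 hb hA hlam hℓ hq hw hvar)

end Chernoff

/-- `‖Uᵀ e_i‖²`, i.e. `μ_i ρ / m` in the normalisation of `μ`. -/
def leverage {m r : Type*} [Fintype r] (U : Matrix m r ℝ) (i : m) : ℝ := ∑ k, U i k ^ 2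

section Gram

variable {m r : Type*} [Fintype r] (U : Matrix m r ℝ)

lemma mul_transpose_self_apply (a i : m) : (U * Uᵀ) a i = ∑ k, U a k * U i k := by
  simp [Matrix.mul_apply]

lemma mul_transpose_self_apply_comm (a i : m) : (U * Uᵀ) i a = (U * Uᵀ) a i := by
  simp only [mul_transpose_self_apply, mul_comm]

lemma mul_transpose_self_apply_self (a : m) : (U * Uᵀ) a a = leverage U a := by
  simp [mul_transpose_self_apply, leverage, sq]

lemma sq_mul_transpose_self_apply_le (a i : m) :
    (U * Uᵀ) a i ^ 2 ≤ leverage U a * leverage U i := by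
  rw [mul_transpose_self_apply]
  exact Finset.sum_mul_sq_le_sq_mul_sq _ _ _

lemma leverage_nonneg (a : m) : 0 ≤ leverage U a :=
  Finset.sum_nonneg fun k _ => sq_nonneg (U a k)

variable [Fintype m] [DecidableEq r] {U}

lemma sum_sq_mul_transpose_self_apply (hU : Uᵀ * U = 1) (a : m) :
    ∑ i, (U * Uᵀ) a i ^ 2 = leverage U a := by
  have hidem : U * Uᵀ * (U * Uᵀ) = U * Uᵀ := by
    rw [Matrix.mul_assoc, ← Matrix.mul_assoc Uᵀ, hU, Matrix.one_mul]
  calc ∑ i, (U * Uᵀ) a i ^ 2 = (U * Uᵀ * (U * Uᵀ)) a a := by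
        simp only [Matrix.mul_apply (M := U * Uᵀ), sq, mul_transpose_self_apply_comm U a]
    _ = leverage U a := by rw [hidem, mul_transpose_self_apply_self]

lemma leverage_le_one (hU : Uᵀ * U = 1) (a : m) : leverage U a ≤ 1 := by
  have hsq := Finset.single_le_sum (fun i _ => sq_nonneg ((U * Uᵀ) a i)) (Finset.mem_univ a)
  rw [sum_sq_mul_transpose_self_apply hU, mul_transpose_self_apply_self] at hsq
  nlinarith [leverage_nonneg U a]

lemma sq_one_sub_leverage_le_one (hU : Uᵀ * U = 1) (a : m) : (1 - leverage U a) ^ 2 ≤ 1 :=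
  pow_le_one₀ (sub_nonneg.2 (leverage_le_one hU a)) (by linarith [leverage_nonneg U a])

end Gram

section PT

variable {m n r : Type*} [Fintype r] (U : Matrix m r ℝ) (V : Matrix n r ℝ)

/-- The paper's `L_ij`; it equals `‖P_T (e_i e_jᵀ)‖²`. -/
def pairLeverage (i : m) (j : n) : ℝ := leverage U i + leverage V j - leverage U i * leverage V j

/-- The entry `(a, b)` of `P_T (e_i e_jᵀ)`. -/
def ptCoeff [DecidableEq m] [DecidableEq n] (a : m) (b : n) (i : m) (j : n) : ℝ :=
  (if j = b then (U * Uᵀ) a i else 0) + (if i = a then (V * Vᵀ) j b else 0)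
    - (U * Uᵀ) a i * (V * Vᵀ) j b

lemma ptCoeff_self [DecidableEq m] [DecidableEq n] (a : m) (b : n) :
    ptCoeff U V a b a b = pairLeverage U V a b := by
  simp only [ptCoeff, if_true, mul_transpose_self_apply_self, pairLeverage]

variable {U V} [DecidableEq r]

lemma leverage_le_pairLeverage [Fintype m] (hU : Uᵀ * U = 1) (i : m) (j : n) :
    leverage U i ≤ pairLeverage U V i j := by
  unfold pairLeverage
  nlinarith [leverage_nonneg V j, leverage_le_one hU i]

lemma leverage_le_pairLeverage' [Fintype n] (hV : Vᵀ * V = 1) (i : m) (j : n) :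
    leverage V j ≤ pairLeverage U V i j := by
  unfold pairLeverage
  nlinarith [leverage_nonneg U i, leverage_le_one hV j]

variable [Fintype m] [Fintype n]

lemma pairLeverage_le_one (hU : Uᵀ * U = 1) (hV : Vᵀ * V = 1) (i : m) (j : n) :
    pairLeverage U V i j ≤ 1 := by
  unfold pairLeverage
  nlinarith [mul_nonneg (sub_nonneg.2 (leverage_le_one hU i)) (sub_nonneg.2 (leverage_le_one hV j))]

lemma mul_leverage_le_pairLeverage (hU : Uᵀ * U = 1) (hV : Vᵀ * V = 1) (i : m) (j : n) :
    leverage U i * leverage V j ≤ pairLeverage U V i j :=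
  (mul_le_of_le_one_right (leverage_nonneg U i) (leverage_le_one hV j)).trans
    (leverage_le_pairLeverage hU i j)

variable [DecidableEq m] [DecidableEq n]

lemma sq_ptCoeff_mul_le (hU : Uᵀ * U = 1) (hV : Vᵀ * V = 1) (a i : m) (b j : n) :
    ptCoeff U V a b i j ^ 2 * (leverage U i * leverage V j)
      ≤ leverage U a * leverage V b * pairLeverage U V i j ^ 2 := by
  have hα := leverage_nonneg U
  have hβ := leverage_nonneg V
  have hP := sq_mul_transpose_self_apply_le U a i
  have hQ := sq_mul_transpose_self_apply_le V b j
  rw [mul_transpose_self_apply_comm] at hQ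
  by_cases hi : i = a <;> by_cases hj : j = b
  · subst hi hj
    exact le_of_eq (by rw [ptCoeff_self]; ring)
  · subst hi
    simp only [ptCoeff, if_true, if_neg hj, mul_transpose_self_apply_self]
    have h1 := mul_le_mul hQ (sq_one_sub_leverage_le_one hU i) (sq_nonneg _)
      (mul_nonneg (hβ b) (hβ j))
    have h2 := mul_le_mul_of_nonneg_right h1 (mul_nonneg (hα i) (hβ j))
    have h3 := mul_le_mul_of_nonneg_left
      (pow_le_pow_left₀ (hβ j) (leverage_le_pairLeverage' (U := U) hV i j) 2)
      (mul_nonneg (hα i) (hβ b))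
    nlinarith
  · subst hj
    simp only [ptCoeff, if_true, if_neg hi, mul_transpose_self_apply_self]
    have h1 := mul_le_mul hP (sq_one_sub_leverage_le_one hV j) (sq_nonneg _)
      (mul_nonneg (hα a) (hα i))
    have h2 := mul_le_mul_of_nonneg_right h1 (mul_nonneg (hα i) (hβ j))
    have h3 := mul_le_mul_of_nonneg_left
      (pow_le_pow_left₀ (hα i) (leverage_le_pairLeverage (V := V) hU i j) 2)
      (mul_nonneg (hα a) (hβ j))
    nlinarith
  · simp only [ptCoeff, if_neg hi, if_neg hj]
    have h1 := mul_le_mul hP hQ (sq_nonneg _) (mul_nonneg (hα a) (hα i))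
    have h2 := mul_le_mul_of_nonneg_right h1 (mul_nonneg (hα i) (hβ j))
    have h3 := mul_le_mul_of_nonneg_left (pow_le_pow_left₀ (mul_nonneg (hα i) (hβ j))
      (mul_leverage_le_pairLeverage hU hV i j) 2) (mul_nonneg (hα a) (hβ b))
    nlinarith

lemma abs_ptCoeff_mul_sqrt_le (hU : Uᵀ * U = 1) (hV : Vᵀ * V = 1) (a i : m) (b j : n) :
    |ptCoeff U V a b i j| * √(leverage U i) * √(leverage V j)
      ≤ √(leverage U a) * √(leverage V b) * pairLeverage U V i j := by
  have hL := (leverage_nonneg U i).trans (leverage_le_pairLeverage (V := V) hU i j)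
  refine (pow_le_pow_iff_left₀ (by positivity) (by positivity) two_ne_zero).1 ?_
  simp only [mul_pow, sq_abs, sq_sqrt (leverage_nonneg _ _)]
  simpa only [mul_assoc] using sq_ptCoeff_mul_le hU hV a i b j

lemma sq_ptCoeff_mul_le_mul (hU : Uᵀ * U = 1) (hV : Vᵀ * V = 1) (a i : m) (b j : n) :
    ptCoeff U V a b i j ^ 2 * (leverage U i * leverage V j)
      ≤ pairLeverage U V i j * (((U * Uᵀ) a i ^ 2 + if i = a then leverage U a else 0)
          * ((V * Vᵀ) j b ^ 2 + if j = b then leverage V b else 0)) := by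
  have hα := leverage_nonneg U
  have hβ := leverage_nonneg V
  have hLα := leverage_le_pairLeverage (V := V) hU i j
  have hLβ := leverage_le_pairLeverage' (U := U) hV i j
  by_cases hi : i = a <;> by_cases hj : j = b
  · subst hi hj
    simp only [ptCoeff_self, if_true, mul_transpose_self_apply_self]
    have hL0 := (hα i).trans hLα
    have h1 := mul_le_mul_of_nonneg_right
      (pow_le_of_le_one hL0 (pairLeverage_le_one hU hV i j) two_ne_zero) (mul_nonneg (hα i) (hβ j))
    have h2 : leverage U i * leverage V j
        ≤ (leverage U i ^ 2 + leverage U i) * (leverage V j ^ 2 + leverage V j) :=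
      mul_le_mul (le_add_of_nonneg_left (sq_nonneg _)) (le_add_of_nonneg_left (sq_nonneg _))
        (hβ j) (add_nonneg (sq_nonneg _) (hα i))
    nlinarith [mul_le_mul_of_nonneg_left h2 hL0]
  · subst hi
    simp only [ptCoeff, if_true, if_neg hj, mul_transpose_self_apply_self, add_zero]
    have h1 := mul_le_mul_of_nonneg_left (sq_one_sub_leverage_le_one hU i)
      (sq_nonneg ((V * Vᵀ) j b))
    have h2 := mul_le_mul_of_nonneg_right h1 (mul_nonneg (hα i) (hβ j))
    have h3 : leverage U i * leverage V j
        ≤ pairLeverage U V i j * (leverage U i ^ 2 + leverage U i) := by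
      nlinarith [mul_le_mul_of_nonneg_left hLβ (hα i),
        mul_nonneg (pow_nonneg (hα i) 2) ((hβ j).trans hLβ)]
    nlinarith [mul_le_mul_of_nonneg_left h3 (sq_nonneg ((V * Vᵀ) j b))]
  · subst hj
    simp only [ptCoeff, if_true, if_neg hi, mul_transpose_self_apply_self, add_zero]
    have h1 := mul_le_mul_of_nonneg_left (sq_one_sub_leverage_le_one hV j)
      (sq_nonneg ((U * Uᵀ) a i))
    have h2 := mul_le_mul_of_nonneg_right h1 (mul_nonneg (hα i) (hβ j))
    have h3 : leverage U i * leverage V j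
        ≤ pairLeverage U V i j * (leverage V j ^ 2 + leverage V j) := by
      nlinarith [mul_le_mul_of_nonneg_right hLα (hβ j),
        mul_nonneg (pow_nonneg (hβ j) 2) ((hα i).trans hLα)]
    nlinarith [mul_le_mul_of_nonneg_left h3 (sq_nonneg ((U * Uᵀ) a i))]
  · simp only [ptCoeff, if_neg hi, if_neg hj, add_zero, zero_sub, neg_sq]
    nlinarith [mul_le_mul_of_nonneg_left (mul_leverage_le_pairLeverage hU hV i j)
      (mul_nonneg (sq_nonneg ((U * Uᵀ) a i)) (sq_nonneg ((V * Vᵀ) j b)))]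

lemma sum_sq_ptCoeff_mul_div_le (hU : Uᵀ * U = 1) (hV : Vᵀ * V = 1) (a : m) (b : n) :
    ∑ i, ∑ j, ptCoeff U V a b i j ^ 2 * (leverage U i * leverage V j) / pairLeverage U V i j
      ≤ 4 * (leverage U a * leverage V b) := by
  have hα := leverage_nonneg U
  have hβ := leverage_nonneg V
  calc _ ≤ ∑ i, ∑ j, ((U * Uᵀ) a i ^ 2 + if i = a then leverage U a else 0)
          * ((V * Vᵀ) j b ^ 2 + if j = b then leverage V b else 0) := by
        gcongr with i _ j _
        refine div_le_of_le_mul₀ ((hα i).trans (leverage_le_pairLeverage hU i j)) ?_ ?_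
        · exact mul_nonneg (add_nonneg (sq_nonneg _) (by split_ifs <;> simp [hα]))
            (add_nonneg (sq_nonneg _) (by split_ifs <;> simp [hβ]))
        · rw [mul_comm _ (pairLeverage U V i j)]
          exact sq_ptCoeff_mul_le_mul hU hV a i b j
    _ = (leverage U a + leverage U a) * (leverage V b + leverage V b) := by
        simp only [← Finset.sum_mul_sum, Finset.sum_add_distrib, Finset.sum_ite_eq',
          Finset.mem_univ, if_true, sum_sq_mul_transpose_self_apply hU,
          mul_transpose_self_apply_comm V b, sum_sq_mul_transpose_self_apply hV]
    _ = _ := by ring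

variable {Z : Matrix m n ℝ} {K : ℝ}

lemma abs_mul_ptCoeff_le (hU : Uᵀ * U = 1) (hV : Vᵀ * V = 1) (hK : 0 ≤ K)
    (hZ : ∀ i j, |Z i j| ≤ K * √(leverage U i) * √(leverage V j)) (a i : m) (b j : n) :
    |Z i j * ptCoeff U V a b i j| ≤ K * √(leverage U a) * √(leverage V b) * pairLeverage U V i j :=
  calc |Z i j * ptCoeff U V a b i j|
      ≤ K * (|ptCoeff U V a b i j| * √(leverage U i) * √(leverage V j)) := by
        rw [abs_mul]
        nlinarith [mul_le_mul_of_nonneg_right (hZ i j) (abs_nonneg (ptCoeff U V a b i j))]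
    _ ≤ K * (√(leverage U a) * √(leverage V b) * pairLeverage U V i j) :=
        mul_le_mul_of_nonneg_left (abs_ptCoeff_mul_sqrt_le hU hV a i b j) hK
    _ = _ := by ring

lemma sum_sq_mul_ptCoeff_div_le (hU : Uᵀ * U = 1) (hV : Vᵀ * V = 1)
    (hZ : ∀ i j, |Z i j| ≤ K * √(leverage U i) * √(leverage V j)) (a : m) (b : n) :
    ∑ i, ∑ j, (Z i j * ptCoeff U V a b i j) ^ 2 / pairLeverage U V i j
      ≤ 4 * (K * √(leverage U a) * √(leverage V b)) ^ 2 := by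
  have hα := leverage_nonneg U
  have hβ := leverage_nonneg V
  have hZsq : ∀ i j, Z i j ^ 2 ≤ K ^ 2 * (leverage U i * leverage V j) := fun i j => by
    have := pow_le_pow_left₀ (abs_nonneg _) (hZ i j) 2
    rwa [sq_abs, mul_pow, mul_pow, sq_sqrt (hα i), sq_sqrt (hβ j), mul_assoc] at this
  calc _ ≤ ∑ i, ∑ j, K ^ 2 * (ptCoeff U V a b i j ^ 2 * (leverage U i * leverage V j)
          / pairLeverage U V i j) := by
        gcongr with i _ j _
        rw [← mul_div_assoc]
        gcongr
        · exact (hα i).trans (leverage_le_pairLeverage hU i j)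
        · nlinarith [mul_le_mul_of_nonneg_right (hZsq i j) (sq_nonneg (ptCoeff U V a b i j))]
    _ ≤ K ^ 2 * (4 * (leverage U a * leverage V b)) := by
        simp only [← Finset.mul_sum]
        gcongr
        exact sum_sq_ptCoeff_mul_div_le hU hV a b
    _ = _ := by
        rw [mul_pow, mul_pow, sq_sqrt (hα a), sq_sqrt (hβ b)]
        ring

end PT

section Sampling

variable {m n ρ : ℕ} (U : Matrix (Fin m) (Fin ρ) ℝ) (V : Matrix (Fin n) (Fin ρ) ℝ)

lemma PT_apply (X : Matrix (Fin m) (Fin n) ℝ) (a : Fin m) (b : Fin n) :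
    PT U V X a b = ∑ i, ∑ j, X i j * ptCoeff U V a b i j := by
  simp only [PT, ptCoeff]
  generalize U * Uᵀ = P
  generalize V * Vᵀ = Q
  simp only [Matrix.sub_apply, Matrix.add_apply, Matrix.mul_apply, mul_add, mul_sub, mul_ite,
    mul_zero, Finset.sum_add_distrib, Finset.sum_sub_distrib, Finset.sum_ite_eq', Finset.mem_univ,
    if_true, Finset.sum_mul]
  congr 1
  · congr 1
    · exact Finset.sum_congr rfl fun i _ => mul_comm _ _
    · rw [Finset.sum_comm]
      simp
  · rw [Finset.sum_comm]
    exact Finset.sum_congr rfl fun i _ => Finset.sum_congr rfl fun j _ => by ring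

lemma PT_sub (X Y : Matrix (Fin m) (Fin n) ℝ) : PT U V X - PT U V Y = PT U V (X - Y) := by
  simp only [PT, Matrix.mul_sub, Matrix.sub_mul]
  abel

lemma RΩ_sub_self_apply (s : Fin m × Fin n → Bool) (q : Fin m → Fin n → ℝ)
    (X : Matrix (Fin m) (Fin n) ℝ) (i : Fin m) (j : Fin n) :
    (RΩ {p | s p = true} q X - X) i j = X i j * bernoulliDeviation (q i j) (s (i, j)) := by
  cases h : s (i, j)
  · simp [RΩ, bernoulliDeviation, h]
  · simp only [Matrix.sub_apply, RΩ, Set.mem_ofPred_eq, h, if_true, bernoulliDeviation]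
    ring

lemma PT_RΩ_sub_PT_apply (s : Fin m × Fin n → Bool) (q : Fin m → Fin n → ℝ)
    (X : Matrix (Fin m) (Fin n) ℝ) (a : Fin m) (b : Fin n) :
    (PT U V (RΩ {p | s p = true} q X) - PT U V X) a b
      = ∑ p : Fin m × Fin n, X p.1 p.2 * ptCoeff U V a b p.1 p.2
          * bernoulliDeviation (q p.1 p.2) (s p) := by
  rw [PT_sub, PT_apply, Fintype.sum_prod_type]
  simp only [RΩ_sub_self_apply, mul_right_comm]

variable {U V}

theorem measure_lt_abs_PT_RΩ_sub_PT_apply_le (hU : Uᵀ * U = 1) (hV : Vᵀ * V = 1)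
    (hα : ∀ i, 0 < leverage U i) {Z : Matrix (Fin m) (Fin n) ℝ} {K : ℝ} (hK : 0 ≤ K)
    (hZ : ∀ i j, |Z i j| ≤ K * √(leverage U i) * √(leverage V j))
    {q : Fin m → Fin n → ℝ} (hq0 : ∀ i j, 0 < q i j) (hq1 : ∀ i j, q i j ≤ 1) {lam : ℝ}
    (hlam : 0 < lam) (hq : ∀ i j, min (lam * pairLeverage U V i j) 1 ≤ q i j)
    {Ω : Type*} [MeasurableSpace Ω] {P : Measure Ω} [IsProbabilityMeasure P]
    {δ : Fin m × Fin n → Ω → Bool} (hδ : ∀ p, Measurable (δ p)) (hindep : iIndepFun δ P)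
    (hb : ∀ i j, P {ω | δ (i, j) ω = true} = ENNReal.ofReal (q i j)) (a : Fin m) (b : Fin n) :
    P {ω | K * √(leverage U a) * √(leverage V b) / 2
        < |(PT U V (RΩ {p | δ p ω = true} q Z) - PT U V Z) a b|}
      ≤ ENNReal.ofReal (2 * exp (-(lam / 64))) := by
  have hL : ∀ i j, 0 < pairLeverage U V i j := fun i j =>
    (hα i).trans_le (leverage_le_pairLeverage hU i j)
  simp_rw [PT_RΩ_sub_PT_apply]
  exact measure_half_lt_abs_sum_bernoulliDeviation_le hδ hindep (fun p => hq0 p.1 p.2)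
    (fun p => hq1 p.1 p.2) (fun p => hb p.1 p.2) (by positivity) hlam (fun p => hL p.1 p.2)
    (fun p => hq p.1 p.2) (fun p => abs_mul_ptCoeff_le hU hV hK hZ a p.1 b p.2)
    (by simpa only [Fintype.sum_prod_type] using sum_sq_mul_ptCoeff_div_le hU hV hZ a b)

end Sampling

lemma muNormInf_le_iff {m n ρ : ℕ} (hm : 0 < m) (hn : 0 < n) (hρ : 0 < ρ) {μ : Fin m → ℝ}
    {ν : Fin n → ℝ} (hμ : ∀ i, 0 < μ i) (hν : ∀ j, 0 < ν j) {Y : Matrix (Fin m) (Fin n) ℝ}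
    {C : ℝ} :
    muNormInf ρ μ ν Y ≤ C ↔ ∀ i j, |Y i j| ≤ C * √(μ i * ρ / m) * √(ν j * ρ / n) := by
  have : Nonempty (Fin m) := ⟨⟨0, hm⟩⟩
  have : Nonempty (Fin n) := ⟨⟨0, hn⟩⟩
  simp only [muNormInf, ciSup_le_iff (Set.finite_range _).bddAbove]
  refine forall_congr' fun i => forall_congr' fun j => ?_
  have hi : 0 < √(μ i * ρ / m) := by have := hμ i; positivity
  have hj : 0 < √(ν j * ρ / n) := by have := hν j; positivity
  rw [← inv_div, sqrt_inv, ← inv_div (ν j * ρ), sqrt_inv, mul_assoc, ← mul_inv,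
    ← div_eq_mul_inv, div_le_iff₀ (mul_pos hi hj), mul_assoc]

lemma mul_div_eq_leverage {m ρ : ℕ} (hm : 0 < m) (hρ : 0 < ρ) {U : Matrix (Fin m) (Fin ρ) ℝ}
    {μ : Fin m → ℝ} (hμ : ∀ i, μ i = ((m : ℝ) / ρ) * ∑ k, U i k ^ 2) (i : Fin m) :
    μ i * ρ / m = leverage U i := by
  rw [hμ i, leverage]
  field_simp

theorem stmt_7_general
    (m n ρ : ℕ) (hm : 0 < m) (hn : 0 < n) (hρ : 0 < ρ)
    (U : Matrix (Fin m) (Fin ρ) ℝ) (V : Matrix (Fin n) (Fin ρ) ℝ)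
    (hU : Uᵀ * U = 1) (hV : Vᵀ * V = 1)
    (μ : Fin m → ℝ) (ν : Fin n → ℝ)
    (hμ : ∀ i, μ i = ((m : ℝ) / ρ) * ∑ k, U i k ^ 2)
    (hν : ∀ j, ν j = ((n : ℝ) / ρ) * ∑ k, V j k ^ 2)
    (hμpos : ∀ i, 0 < μ i) (hνpos : ∀ j, 0 < ν j)
    (Z : Matrix (Fin m) (Fin n) ℝ) (c c₀ : ℝ) (hc : 3 < c) (hc₀ : 68 * c ≤ c₀)
    (L : Fin m → Fin n → ℝ)
    (hL : ∀ i j, L i j = μ i * ρ / m + ν j * ρ / n - (μ i * ρ / m) * (ν j * ρ / n))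
    (q : Fin m → Fin n → ℝ) (hq0 : ∀ i j, 0 < q i j) (hq1 : ∀ i j, q i j ≤ 1)
    (hq : ∀ i j, min (c₀ * Real.log ((m : ℝ) + n) * L i j) 1 ≤ q i j)
    (Ω' : Type) [MeasurableSpace Ω'] (P : Measure Ω') [IsProbabilityMeasure P]
    (δ : Fin m × Fin n → Ω' → Bool) (hmeas : ∀ ij, Measurable (δ ij))
    (hindep : iIndepFun δ P)
    (hbern : ∀ i j, P {ω | δ (i, j) ω = true} = ENNReal.ofReal (q i j)) :
    P {ω | muNormInf ρ μ ν (PT U V (RΩ {ij | δ ij ω = true} q Z) - PT U V Z)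
          ≤ (1 / 2) * muNormInf ρ μ ν Z}
      ≥ ENNReal.ofReal (1 - ((m : ℝ) + n) ^ ((3 : ℝ) - c)) := by
  have hμU := mul_div_eq_leverage hm hρ hμ
  have hνV := mul_div_eq_leverage hn hρ hν
  have hα : ∀ i, 0 < leverage U i := fun i => hμU i ▸ by have := hμpos i; positivity
  have hnorm : ∀ Y C, muNormInf ρ μ ν Y ≤ C
      ↔ ∀ i j, |Y i j| ≤ C * √(leverage U i) * √(leverage V j) := fun Y C => by
    simpa only [hμU, hνV] using muNormInf_le_iff hm hn hρ hμpos hνpos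
  set K := muNormInf ρ μ ν Z
  have hK : 0 ≤ K := iSup_nonneg fun i => iSup_nonneg fun j => by positivity
  have hlam : 0 < c₀ * log ((m : ℝ) + n) := mul_pos (by linarith) (log_pos (by norm_cast; omega))
  set E : Fin m × Fin n → Set Ω' := fun p => {ω | K * √(leverage U p.1) * √(leverage V p.2) / 2
    < |(PT U V (RΩ {ij | δ ij ω = true} q Z) - PT U V Z) p.1 p.2|}
  calc P {ω | muNormInf ρ μ ν (PT U V (RΩ {ij | δ ij ω = true} q Z) - PT U V Z) ≤ 1 / 2 * K}
      ≥ P (⋃ p, E p)ᶜ := measure_mono fun ω hω => by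
        simp only [E, Set.mem_compl_iff, Set.mem_iUnion, not_exists, Set.mem_ofPred_eq,
          not_lt] at hω
        exact (hnorm _ _).2 fun i j => by linarith [hω (i, j)]
    _ ≥ ENNReal.ofReal
          (1 - Fintype.card (Fin m × Fin n) * (2 * exp (-(c₀ * log (m + n) / 64)))) :=
        ofReal_one_sub_card_mul_le_measure_compl_iUnion (by positivity) fun p =>
          measure_lt_abs_PT_RΩ_sub_PT_apply_le hU hV hα hK ((hnorm Z K).1 le_rfl) hq0 hq1 hlam
            (fun i j => by simpa only [hL, hμU, hνV, pairLeverage] using hq i j) hmeas hindep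
            hbern p.1 p.2
    _ ≥ ENNReal.ofReal (1 - ((m : ℝ) + n) ^ ((3 : ℝ) - c)) := by
        have := mul_mul_two_exp_le_rpow (x := m) (y := n) (by norm_cast; omega)
          (show 64 * (c - 1) ≤ c₀ by linarith)
        simp only [Fintype.card_prod, Fintype.card_fin, Nat.cast_mul]
        exact ENNReal.ofReal_le_ofReal (by linarith)

/-- (Lemma 4.) Under Bernoulli sampling of the entries with probabilities
`q_ij ≥ min{c₀ log(m+n) L_ij, 1}` (relaxed leverage scores `L_ij`), for a fixed matrix `Z`,
any `c > 3` and `c₀ ≥ 68c`, with probability at least `1 − (m+n)^{3−c}`,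
`‖(P_T R_Ω − P_T)(Z)‖_{μ(∞)} ≤ (1/2)‖Z‖_{μ(∞)}`. -/
theorem stmt_7
    (m n ρ : ℕ) (hm : 0 < m) (hn : 0 < n) (hρ : 0 < ρ)
    (M : Matrix (Fin m) (Fin n) ℝ) (hrank : M.rank = ρ)
    (U : Matrix (Fin m) (Fin ρ) ℝ) (V : Matrix (Fin n) (Fin ρ) ℝ) (σ : Fin ρ → ℝ)
    (hU : Uᵀ * U = 1) (hV : Vᵀ * V = 1) (hσ : ∀ k, 0 < σ k)
    (hM : M = U * Matrix.diagonal σ * Vᵀ)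
    (μ : Fin m → ℝ) (ν : Fin n → ℝ)
    (hμ : ∀ i, μ i = ((m : ℝ) / ρ) * ∑ k, U i k ^ 2)
    (hν : ∀ j, ν j = ((n : ℝ) / ρ) * ∑ k, V j k ^ 2)
    (hμpos : ∀ i, 0 < μ i) (hνpos : ∀ j, 0 < ν j)
    (Z : Matrix (Fin m) (Fin n) ℝ) (c c₀ : ℝ) (hc : 3 < c) (hc₀ : 68 * c ≤ c₀)
    (L : Fin m → Fin n → ℝ)
    (hL : ∀ i j, L i j = μ i * ρ / m + ν j * ρ / n - (μ i * ρ / m) * (ν j * ρ / n))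
    (q : Fin m → Fin n → ℝ) (hq0 : ∀ i j, 0 < q i j) (hq1 : ∀ i j, q i j ≤ 1)
    (hq : ∀ i j, min (c₀ * Real.log ((m : ℝ) + n) * L i j) 1 ≤ q i j)
    (Ω' : Type) [MeasurableSpace Ω'] (P : Measure Ω') [IsProbabilityMeasure P]
    (δ : Fin m × Fin n → Ω' → Bool) (hmeas : ∀ ij, Measurable (δ ij))
    (hindep : iIndepFun δ P)
    (hbern : ∀ i j, P {ω | δ (i, j) ω = true} = ENNReal.ofReal (q i j)) :
    P {ω | muNormInf ρ μ ν (PT U V (RΩ {ij | δ ij ω = true} q Z) - PT U V Z)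
          ≤ (1 / 2) * muNormInf ρ μ ν Z}
      ≥ ENNReal.ofReal (1 - ((m : ℝ) + n) ^ ((3 : ℝ) - c)) :=
  stmt_7_general m n ρ hm hn hρ U V hU hV μ ν hμ hν hμpos hνpos Z c c₀ hc hc₀ L hL q hq0 hq1 hq Ω' P
    δ hmeas hindep hbern
end

section
/- Let M ∈ ℝ^{m×n} have rank ρ with SVD M = UΣVᵀ, let Γ ⊆ [m], and let S_Γ(X) denote the matrix obtained from X by zeroing out the rows with indices outside Γ. If Uᵀ S_Γ(U) ∈ ℝ^{ρ×ρ} is invertible (in particular, if ‖Uᵀ S_Γ(U) − I_ρ‖₂ < 1), then S_Γ(M) has rank ρ and the row space of S_Γ(M) equals the row space of M, namely the column space of V. -/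
open Matrix

open Classical in
/-- `S_Γ(X)`: zero out all rows of `X` whose index is not in `Γ`. -/
noncomputable def SΓ {m n : ℕ} (Γ : Set (Fin m)) (X : Matrix (Fin m) (Fin n) ℝ) :
    Matrix (Fin m) (Fin n) ℝ :=
  fun i j => if i ∈ Γ then X i j else 0

lemma SΓ_mul {m n k : ℕ} (Γ : Set (Fin m)) (A : Matrix (Fin m) (Fin k) ℝ)
    (B : Matrix (Fin k) (Fin n) ℝ) : SΓ Γ (A * B) = SΓ Γ A * B := by
  classical
  ext i j
  by_cases h : i ∈ Γ <;> simp [SΓ, mul_apply, h]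

lemma surj_of_right_inv {a b : ℕ} (X : Matrix (Fin a) (Fin b) ℝ)
    (Y : Matrix (Fin b) (Fin a) ℝ) (h : X * Y = 1) :
    Function.Surjective X.mulVecLin := by
  intro v
  refine ⟨Y.mulVecLin v, ?_⟩
  simp [mulVecLin_apply, mulVec_mulVec, h]

lemma range_mul_eq {a b c : ℕ} (V : Matrix (Fin a) (Fin b) ℝ)
    (B : Matrix (Fin b) (Fin c) ℝ) (hB : Function.Surjective B.mulVecLin) :
    LinearMap.range (V * B).mulVecLin = LinearMap.range V.mulVecLin := by
  rw [Matrix.mulVecLin_mul]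
  exact LinearMap.range_comp_of_range_eq_top _ (LinearMap.range_eq_top.mpr hB)

/-- Let `M = UΣVᵀ ∈ ℝ^{m×n}` have rank `ρ`, let `Γ ⊆ [m]`, and let `S_Γ` zero out the rows
outside `Γ`. If `Uᵀ S_Γ(U) ∈ ℝ^{ρ×ρ}` is invertible, then `S_Γ(M)` has rank `ρ` and the row
space of `S_Γ(M)` equals the row space of `M`, namely the column space of `V`. -/
theorem stmt_13 (m n ρ : ℕ)
    (M : Matrix (Fin m) (Fin n) ℝ) (hrank : M.rank = ρ)
    (U : Matrix (Fin m) (Fin ρ) ℝ) (V : Matrix (Fin n) (Fin ρ) ℝ) (σ : Fin ρ → ℝ)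
    (hU : Uᵀ * U = 1) (hV : Vᵀ * V = 1) (hσ : ∀ k, 0 < σ k)
    (hM : M = U * Matrix.diagonal σ * Vᵀ)
    (Γ : Set (Fin m))
    (hinv : IsUnit (Uᵀ * SΓ Γ U)) :
    (SΓ Γ M).rank = ρ ∧
    LinearMap.range (Matrix.mulVecLin (SΓ Γ M)ᵀ) = LinearMap.range (Matrix.mulVecLin Mᵀ) ∧
    LinearMap.range (Matrix.mulVecLin Mᵀ) = LinearMap.range (Matrix.mulVecLin V) := by
  have hσne : ∀ k, σ k ≠ 0 := fun k => (hσ k).ne'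
  have hdiag : Matrix.diagonal σ * Matrix.diagonal (fun k => (σ k)⁻¹) = 1 := by
    rw [Matrix.diagonal_mul_diagonal]
    simp [Matrix.diagonal_one, funext fun k => mul_inv_cancel₀ (hσne k)]
  -- Mᵀ = V * (diag σ * Uᵀ)
  have hMT : Mᵀ = V * (Matrix.diagonal σ * Uᵀ) := by
    rw [hM]
    simp [Matrix.transpose_mul, Matrix.diagonal_transpose, Matrix.mul_assoc]
  -- B1 := diag σ * Uᵀ is surjective
  have hB1 : Function.Surjective (Matrix.diagonal σ * Uᵀ).mulVecLin := by
    apply surj_of_right_inv _ (U * Matrix.diagonal (fun k => (σ k)⁻¹))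
    calc Matrix.diagonal σ * Uᵀ * (U * Matrix.diagonal fun k => (σ k)⁻¹)
        = Matrix.diagonal σ * (Uᵀ * U) * Matrix.diagonal (fun k => (σ k)⁻¹) := by
          simp only [Matrix.mul_assoc]
      _ = 1 := by rw [hU, Matrix.mul_one, hdiag]
  -- SΓ M transpose
  have hSM : SΓ Γ M = SΓ Γ U * (Matrix.diagonal σ * Vᵀ) := by
    rw [hM, Matrix.mul_assoc, SΓ_mul]
  have hSMT : (SΓ Γ M)ᵀ = V * (Matrix.diagonal σ * (SΓ Γ U)ᵀ) := by
    rw [hSM]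
    simp [Matrix.transpose_mul, Matrix.diagonal_transpose, Matrix.mul_assoc]
  -- B2 := diag σ * (SΓ U)ᵀ surjective
  have hinvT : IsUnit (Uᵀ * SΓ Γ U)ᵀ := (Matrix.isUnit_iff_isUnit_det _).mpr (by rw [Matrix.det_transpose]; exact (Matrix.isUnit_iff_isUnit_det _).mp hinv)
  have hA : (SΓ Γ U)ᵀ * U * ((Uᵀ * SΓ Γ U)ᵀ)⁻¹ = 1 := by
    have : (SΓ Γ U)ᵀ * U = (Uᵀ * SΓ Γ U)ᵀ := by
      rw [Matrix.transpose_mul, Matrix.transpose_transpose]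
    rw [this]
    exact Matrix.mul_nonsing_inv _ ((Matrix.isUnit_iff_isUnit_det _).mp hinvT)
  have hB2 : Function.Surjective (Matrix.diagonal σ * (SΓ Γ U)ᵀ).mulVecLin := by
    apply surj_of_right_inv _ (U * ((Uᵀ * SΓ Γ U)ᵀ)⁻¹ * Matrix.diagonal (fun k => (σ k)⁻¹))
    calc Matrix.diagonal σ * (SΓ Γ U)ᵀ * (U * ((Uᵀ * SΓ Γ U)ᵀ)⁻¹ * Matrix.diagonal fun k => (σ k)⁻¹)
        = Matrix.diagonal σ * ((SΓ Γ U)ᵀ * U * ((Uᵀ * SΓ Γ U)ᵀ)⁻¹) * Matrix.diagonal (fun k => (σ k)⁻¹) := by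
          simp only [Matrix.mul_assoc]
      _ = 1 := by rw [hA, Matrix.mul_one, hdiag]
  have h2 : LinearMap.range (Matrix.mulVecLin Mᵀ) = LinearMap.range (Matrix.mulVecLin V) := by
    rw [hMT]; exact range_mul_eq V _ hB1
  have h1 : LinearMap.range (Matrix.mulVecLin (SΓ Γ M)ᵀ) = LinearMap.range (Matrix.mulVecLin V) := by
    rw [hSMT]; exact range_mul_eq V _ hB2
  -- rank V = ρ
  have hVinj : Function.Injective V.mulVecLin := by
    intro x y hxy
    have : Vᵀ.mulVec (V.mulVec x) = Vᵀ.mulVec (V.mulVec y) := by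
      simpa [mulVecLin_apply] using congrArg Vᵀ.mulVec hxy
    simpa [mulVec_mulVec, hV, Matrix.one_mulVec] using this
  have hrankV : V.rank = ρ := by
    rw [Matrix.rank, LinearMap.finrank_range_of_inj hVinj]
    simp
  have hr : (SΓ Γ M).rank = ρ := by
    rw [← Matrix.rank_transpose, Matrix.rank, h1, ← Matrix.rank, hrankV]
  exact ⟨hr, h1.trans h2.symm, h2⟩
end
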